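/- Every selector-free first-order formula φ in the theory of (co)datatypes can be effectively transformed into a formula φ'' of the extended first-order language of trees (over the signature whose sorts are the (co)datatypes and whose generators are the constructors) that is equisatisfiable with φ: φ is satisfiable in some structure of (co)datatypes if and only if φ'' is satisfiable in the structure 𝒯 of trees. Concretely, φ'' is obtained by relativizing every quantifier over a datatype d to fin (replacing ∃x:d. ψ by ∃x:d. fin(x) ∧ ψ and ∀x:d. ψ by ∀x:d. fin(x) → ψ) and conjoining fin(u) for every free variable u of datatype sort. -/

import Mathlib

set_option linter.unusedVariables false


/-- A many-sorted signature: sorts and generators (function symbols),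
each generator `g` having argument sorts `src g` and target sort `tgt g`. -/
structure Sig where
  Srt : Type
  Gen : Type
  tgt : Gen → Srt
  src : Gen → List Srt

namespace Sig

variable (σ : Sig)

/-- The generators of a sort `s`. -/
def Gens (s : σ.Srt) : Set σ.Gen := { g | σ.tgt g = s }

/-- A labeling of positions (lists of natural numbers) by generators is a valid
tree labeling if children exist exactly according to arity and have the right sorts. -/
def IsLabeling (L : List ℕ → Option σ.Gen) : Prop :=
  (∀ p, L p = none → ∀ i, L (p ++ [i]) = none) ∧
  (∀ p g, L p = some g → ∀ i, ((L (p ++ [i])).isSome ↔ i < (σ.src g).length)) ∧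
  (∀ p g i g', L p = some g → L (p ++ [i]) = some g' →
      (σ.src g)[i]? = some (σ.tgt g'))

/-- A (possibly infinite) tree of sort `s`. -/
structure Tree (s : σ.Srt) where
  L : List ℕ → Option σ.Gen
  isLab : σ.IsLabeling L
  root : ∃ g, L [] = some g ∧ σ.tgt g = s

variable {σ}

/-- A tree is finite if it has finitely many nodes. -/
def Tree.IsFinite {s : σ.Srt} (t : σ.Tree s) : Prop :=
  { p : List ℕ | (t.L p).isSome }.Finite

/-- The tree has depth at most `d`. -/
def Tree.DepthLE {s : σ.Srt} (t : σ.Tree s) (d : ℕ) : Prop :=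
  ∀ p, (t.L p).isSome → p.length ≤ d

variable (σ)

/-- Build a tree with root labeled `g` from given immediate subtrees. -/
def build (g : σ.Gen) (c : ∀ i : Fin (σ.src g).length, σ.Tree ((σ.src g).get i)) :
    σ.Tree (σ.tgt g) where
  L := fun p =>
    match p with
    | [] => some g
    | i :: q => if h : i < (σ.src g).length then (c ⟨i, h⟩).L q else none
  isLab := by
    refine ⟨?_, ?_, ?_⟩
    · intro p hp i
      match p with
      | [] => simp at hp
      | j :: q =>
        simp only [List.cons_append]
        by_cases h : j < (σ.src g).length
        · simp only [dif_pos h] at hp ⊢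
          exact (c ⟨j, h⟩).isLab.1 q hp i
        · simp only [dif_neg h]
    · intro p g' hp i
      match p with
      | [] =>
        injection hp with hg
        subst hg
        by_cases h : i < (σ.src g).length
        · simp only [List.nil_append, dif_pos h]
          obtain ⟨g₀, h₀, -⟩ := (c ⟨i, h⟩).root
          simp [h₀, h]
        · simp [List.nil_append, dif_neg h, h]
      | j :: q =>
        by_cases h : j < (σ.src g).length
        · simp only [dif_pos h] at hp
          simp only [List.cons_append, dif_pos h]
          exact (c ⟨j, h⟩).isLab.2.1 q g' hp i
        · simp only [dif_neg h] at hp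
          exact nomatch hp
    · intro p g' i g'' hp hpi
      match p with
      | [] =>
        injection hp with hg
        subst hg
        by_cases h : i < (σ.src g).length
        · simp only [List.nil_append, dif_pos h] at hpi
          obtain ⟨g₀, h₀, htgt⟩ := (c ⟨i, h⟩).root
          rw [h₀, Option.some.injEq] at hpi
          subst hpi
          rw [List.getElem?_eq_getElem h]
          exact congrArg some htgt.symm
        · simp only [List.nil_append, dif_neg h] at hpi
          exact nomatch hpi
      | j :: q =>
        by_cases h : j < (σ.src g).length
        · simp only [dif_pos h] at hp
          simp only [List.cons_append, dif_pos h] at hpi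
          exact (c ⟨j, h⟩).isLab.2.2 q g' i g'' hp hpi
        · simp only [dif_neg h] at hp
          exact nomatch hp
  root := ⟨g, rfl, rfl⟩

/-- Sorts with no infinite trees. -/
def S0I : Set σ.Srt := { s | ∀ t : σ.Tree s, t.IsFinite }
/-- Sorts with no finite trees. -/
def S0F : Set σ.Srt := { s | ∀ t : σ.Tree s, ¬ t.IsFinite }
/-- Sorts with only finitely many finite trees. -/
def SFF : Set σ.Srt := { s | { t : σ.Tree s | t.IsFinite }.Finite }
/-- Sorts with only finitely many infinite trees. -/
def SFI : Set σ.Srt := { s | { t : σ.Tree s | ¬ t.IsFinite }.Finite }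
/-- Sorts with exactly one infinite tree. -/
def S1I : Set σ.Srt := { s | ∃! t : σ.Tree s, ¬ t.IsFinite }

/-- Terms of the (extended) first-order language of trees. Variables are
pairs of a sort and a number. -/
inductive Tm : σ.Srt → Type
  | var (s : σ.Srt) (n : ℕ) : Tm s
  | app (g : σ.Gen) (args : ∀ i : Fin (σ.src g).length, Tm ((σ.src g).get i)) :
      Tm (σ.tgt g)

/-- Valuations assign trees to (sorted) variables. -/
def Val := ∀ s : σ.Srt, ℕ → σ.Tree s

variable {σ}

/-- Evaluation of a term in the structure of trees under a valuation. -/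
def Tm.eval (ρ : σ.Val) : ∀ {s : σ.Srt}, σ.Tm s → σ.Tree s
  | _, .var s n => ρ s n
  | _, .app g args => σ.build g (fun i => (args i).eval ρ)

/-- The (sorted) free variables of a term. -/
def Tm.fv : ∀ {s : σ.Srt}, σ.Tm s → Set ((s : σ.Srt) × ℕ)
  | _, .var s n => {⟨s, n⟩}
  | _, .app _ args => ⋃ i, (args i).fv

/-- A term is flat if it is a variable or a generator applied to variables. -/
def Tm.IsFlat : ∀ {s : σ.Srt}, σ.Tm s → Prop
  | _, .var _ _ => True
  | _, .app g args => ∀ i : Fin (σ.src g).length, ∃ n, args i = Tm.var ((σ.src g).get i) n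

/-- A term of the form `f(z̄)`. -/
def Tm.IsApp : ∀ {s : σ.Srt}, σ.Tm s → Prop
  | _, .var _ _ => False
  | _, .app _ _ => True

open Classical in
/-- Update a valuation at one sorted variable. -/
noncomputable def updV (ρ : σ.Val) (s : σ.Srt) (n : ℕ) (t : σ.Tree s) : σ.Val :=
  fun s' m =>
    if h : s' = s then
      (if m = n then cast (congrArg σ.Tree h.symm) t else ρ s' m)
    else ρ s' m

variable (σ)

/-- Formulae of the extended first-order language of trees: equality,
the finiteness predicates `fin`, propositional connectives and sorted quantifiers. -/
inductive Fml : Type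
  | tru : Fml
  | fls : Fml
  | eq {s : σ.Srt} (a b : σ.Tm s) : Fml
  | fin {s : σ.Srt} (a : σ.Tm s) : Fml
  | not (φ : Fml) : Fml
  | and (φ ψ : Fml) : Fml
  | or (φ ψ : Fml) : Fml
  | imp (φ ψ : Fml) : Fml
  | ex (s : σ.Srt) (n : ℕ) (φ : Fml) : Fml
  | all (s : σ.Srt) (n : ℕ) (φ : Fml) : Fml

variable {σ}

/-- Satisfaction of a formula in the structure `𝒯` of trees under a valuation. -/
def Fml.Sat (ρ : σ.Val) : σ.Fml → Prop
  | .tru => True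
  | .fls => False
  | .eq a b => a.eval ρ = b.eval ρ
  | .fin a => (a.eval ρ).IsFinite
  | .not φ => ¬ φ.Sat ρ
  | .and φ ψ => φ.Sat ρ ∧ ψ.Sat ρ
  | .or φ ψ => φ.Sat ρ ∨ ψ.Sat ρ
  | .imp φ ψ => φ.Sat ρ → ψ.Sat ρ
  | .ex s n φ => ∃ t : σ.Tree s, φ.Sat (updV ρ s n t)
  | .all s n φ => ∀ t : σ.Tree s, φ.Sat (updV ρ s n t)

/-- The free variables of a formula. -/
def Fml.fv : σ.Fml → Set ((s : σ.Srt) × ℕ)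
  | .tru => ∅
  | .fls => ∅
  | .eq a b => a.fv ∪ b.fv
  | .fin a => a.fv
  | .not φ => φ.fv
  | .and φ ψ => φ.fv ∪ ψ.fv
  | .or φ ψ => φ.fv ∪ ψ.fv
  | .imp φ ψ => φ.fv ∪ ψ.fv
  | .ex s n φ => φ.fv \ {⟨s, n⟩}
  | .all s n φ => φ.fv \ {⟨s, n⟩}

/-- Two formulae are equivalent in the extended theory of trees if they are
satisfied by exactly the same valuations. -/
def FmlEquiv (φ ψ : σ.Fml) : Prop := ∀ ρ : σ.Val, φ.Sat ρ ↔ ψ.Sat ρ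

end Sig

/-- A signature of algebraic (co)datatypes: a many-sorted signature whose sorts
are partitioned into datatypes (`isData`) and codatatypes, whose generators are
the constructors; the argument sorts of a constructor of a datatype
(resp. codatatype) are datatypes (resp. codatatypes), each sort has at least one
and finitely many constructors, and every datatype is well-founded (it has a
ground constructor term, i.e. a finite tree). Each constructor `C` comes with
selectors `sel_C^i`, one for each argument position. -/
structure DSig extends Sig where
  isData : Srt → Prop
  mix : ∀ g : Gen, ∀ s ∈ src g, (isData (tgt g) ↔ isData s)
  ctorsNonempty : ∀ s : Srt, ∃ g : Gen, tgt g = s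
  ctorsFinite : ∀ s : Srt, { g : Gen | tgt g = s }.Finite
  wfData : ∀ s : Srt, isData s → ∃ t : toSig.Tree s, t.IsFinite

namespace DSig

variable (σ : DSig)

/-- The domain of a sort in a structure of (co)datatypes: all constructor trees
for a codatatype, the finite constructor trees for a datatype. -/
def Dom (s : σ.Srt) : Type :=
  { t : σ.toSig.Tree s // σ.isData s → t.IsFinite }

/-- The interpretation of a constructor: build a new tree with the given root. -/
def buildD (g : σ.Gen)
    (c : ∀ i : Fin (σ.src g).length, σ.Dom ((σ.src g).get i)) :
    σ.Dom (σ.tgt g) :=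
  ⟨σ.toSig.build g fun i => (c i).1, by
    intro hd
    have hfin : ∀ i : Fin (σ.src g).length, Sig.Tree.IsFinite (c i).1 := fun i =>
      (c i).2 ((σ.mix g _ (List.get_mem _ i)).mp hd)
    have hsub : { p : List ℕ | ((σ.toSig.build g fun i => (c i).1).L p).isSome } ⊆
        insert [] (⋃ i : Fin (σ.src g).length,
          (List.cons i.1) '' { q : List ℕ | (((c i).1).L q).isSome }) := by
      intro p hp
      match p with
      | [] => exact Set.mem_insert _ _
      | j :: q =>
        have hp' : (if h : j < (σ.src g).length then ((c ⟨j, h⟩).1).L q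
            else none).isSome := hp
        by_cases h : j < (σ.src g).length
        · rw [dif_pos h] at hp'
          exact Set.mem_insert_iff.mpr (Or.inr (Set.mem_iUnion.mpr
            ⟨⟨j, h⟩, ⟨q, hp', rfl⟩⟩))
        · rw [dif_neg h] at hp'
          exact absurd hp' (by simp)
    exact Set.Finite.subset
      (Set.Finite.insert _ (Set.finite_iUnion fun i => (hfin i).image _)) hsub⟩

/-- Terms of the first-order language of (co)datatypes: variables, constructor
applications and selector applications (`sel g i` is the `i`-th selector of the
constructor `g`). -/
inductive DTm : σ.Srt → Type
  | var (s : σ.Srt) (n : ℕ) : DTm s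
  | ctor (g : σ.Gen)
      (args : ∀ i : Fin (σ.src g).length, DTm ((σ.src g).get i)) : DTm (σ.tgt g)
  | sel (g : σ.Gen) (i : Fin (σ.src g).length) (t : DTm (σ.tgt g)) :
      DTm ((σ.src g).get i)

/-- A structure of (co)datatypes (standard selector semantics): the domains and
the constructor interpretations are fixed, and the selectors are arbitrary
functions satisfying `sel_C^i (C(t₁, …, tₙ)) = tᵢ`. -/
structure DStruct where
  sel : ∀ (g : σ.Gen) (i : Fin (σ.src g).length),
      σ.Dom (σ.tgt g) → σ.Dom ((σ.src g).get i)
  sel_spec : ∀ (g : σ.Gen) (i : Fin (σ.src g).length)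
      (c : ∀ j : Fin (σ.src g).length, σ.Dom ((σ.src g).get j)),
      sel g i (σ.buildD g c) = c i

/-- Valuations in a structure of (co)datatypes. -/
def DVal := ∀ s : σ.Srt, ℕ → σ.Dom s

variable {σ}

/-- Evaluation of a term in a structure of (co)datatypes under a valuation. -/
def DTm.eval (M : σ.DStruct) (ρ : σ.DVal) : ∀ {s : σ.Srt}, σ.DTm s → σ.Dom s
  | _, .var s n => ρ s n
  | _, .ctor g args => σ.buildD g fun i => (args i).eval M ρ
  | _, .sel g i t => M.sel g i (t.eval M ρ)

/-- A term is selector-free. -/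
def DTm.SelFree : ∀ {s : σ.Srt}, σ.DTm s → Prop
  | _, .var _ _ => True
  | _, .ctor _ args => ∀ i, (args i).SelFree
  | _, .sel _ _ _ => False

/-- The (sorted) free variables of a term. -/
def DTm.fv : ∀ {s : σ.Srt}, σ.DTm s → Set ((s : σ.Srt) × ℕ)
  | _, .var s n => {⟨s, n⟩}
  | _, .ctor _ args => ⋃ i, (args i).fv
  | _, .sel _ _ t => t.fv

open Classical in
/-- Update a valuation at one sorted variable. -/
noncomputable def updD (ρ : σ.DVal) (s : σ.Srt) (n : ℕ) (t : σ.Dom s) : σ.DVal :=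
  fun s' m =>
    if h : s' = s then
      (if m = n then cast (congrArg σ.Dom h.symm) t else ρ s' m)
    else ρ s' m

variable (σ)

/-- Formulae of the first-order language of (co)datatypes. -/
inductive DFml : Type
  | eq {s : σ.Srt} (a b : σ.DTm s) : DFml
  | not (φ : DFml) : DFml
  | and (φ ψ : DFml) : DFml
  | or (φ ψ : DFml) : DFml
  | imp (φ ψ : DFml) : DFml
  | ex (s : σ.Srt) (n : ℕ) (φ : DFml) : DFml
  | all (s : σ.Srt) (n : ℕ) (φ : DFml) : DFml

variable {σ}

/-- Satisfaction of a formula in a structure of (co)datatypes. -/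
def DFml.Sat (M : σ.DStruct) (ρ : σ.DVal) : σ.DFml → Prop
  | .eq a b => a.eval M ρ = b.eval M ρ
  | .not φ => ¬ φ.Sat M ρ
  | .and φ ψ => φ.Sat M ρ ∧ ψ.Sat M ρ
  | .or φ ψ => φ.Sat M ρ ∨ ψ.Sat M ρ
  | .imp φ ψ => φ.Sat M ρ → ψ.Sat M ρ
  | .ex s n φ => ∃ t : σ.Dom s, φ.Sat M (updD ρ s n t)
  | .all s n φ => ∀ t : σ.Dom s, φ.Sat M (updD ρ s n t)

/-- A formula is selector-free. -/
def DFml.SelFree : σ.DFml → Prop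
  | .eq a b => a.SelFree ∧ b.SelFree
  | .not φ => φ.SelFree
  | .and φ ψ => φ.SelFree ∧ ψ.SelFree
  | .or φ ψ => φ.SelFree ∧ ψ.SelFree
  | .imp φ ψ => φ.SelFree ∧ ψ.SelFree
  | .ex _ _ φ => φ.SelFree
  | .all _ _ φ => φ.SelFree

/-- A formula is quantifier-free. -/
def DFml.QFree : σ.DFml → Prop
  | .eq _ _ => True
  | .not φ => φ.QFree
  | .and φ ψ => φ.QFree ∧ ψ.QFree
  | .or φ ψ => φ.QFree ∧ ψ.QFree
  | .imp φ ψ => φ.QFree ∧ ψ.QFree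
  | .ex _ _ _ => False
  | .all _ _ _ => False

/-- The free variables of a formula. -/
def DFml.fv : σ.DFml → Set ((s : σ.Srt) × ℕ)
  | .eq a b => a.fv ∪ b.fv
  | .not φ => φ.fv
  | .and φ ψ => φ.fv ∪ ψ.fv
  | .or φ ψ => φ.fv ∪ ψ.fv
  | .imp φ ψ => φ.fv ∪ ψ.fv
  | .ex s n φ => φ.fv \ {⟨s, n⟩}
  | .all s n φ => φ.fv \ {⟨s, n⟩}

end DSig

/-- Translation of selector-free (co)datatype terms into terms of the language of
trees (selector subterms, which do not occur in selector-free terms, are mapped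
to a dummy variable). -/
def toTm (σ : DSig) : ∀ {s : σ.Srt}, σ.DTm s → σ.toSig.Tm s
  | _, .var s n => .var s n
  | _, .ctor g args => .app g fun i => toTm σ (args i)
  | _, .sel g i _ => .var ((σ.src g).get i) 0

open Classical in
/-- The relativization transformation: every quantifier over a datatype `d` is
relativized to `fin` (replacing `∃x:d. ψ` by `∃x:d. fin(x) ∧ ψ` and `∀x:d. ψ` by
`∀x:d. fin(x) → ψ`). -/
noncomputable def relFin (σ : DSig) : σ.DFml → σ.toSig.Fml
  | .eq a b => .eq (toTm σ a) (toTm σ b)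
  | .not φ => .not (relFin σ φ)
  | .and φ ψ => .and (relFin σ φ) (relFin σ ψ)
  | .or φ ψ => .or (relFin σ φ) (relFin σ ψ)
  | .imp φ ψ => .imp (relFin σ φ) (relFin σ ψ)
  | .ex s n φ =>
      if σ.isData s then .ex s n (.and (.fin (.var s n)) (relFin σ φ))
      else .ex s n (relFin σ φ)
  | .all s n φ =>
      if σ.isData s then .all s n (.imp (.fin (.var s n)) (relFin σ φ))
      else .all s n (relFin σ φ)

/-! A structure of (co)datatypes is the part of the structure `𝒯` of trees consisting of
the trees that are finite at datatype sorts, with the same constructors. Since a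
selector-free formula mentions only constructors, its satisfaction there is satisfaction
in `𝒯` with the datatype quantifiers relativized to `fin`. Conversely, a valuation in `𝒯`
yields an element of every domain, which is all that is needed to extend the injective
constructors by selectors to a structure of (co)datatypes. -/

namespace Sig

variable {σ : Sig}

theorem Tree.ext {s : σ.Srt} {t₁ t₂ : σ.Tree s} (h : t₁.L = t₂.L) : t₁ = t₂ := by
  cases t₁; cases t₂; cases h; rfl

theorem build_L_cons (g : σ.Gen) (c : ∀ i : Fin (σ.src g).length, σ.Tree ((σ.src g).get i))
    (i : Fin (σ.src g).length) (q : List ℕ) : (σ.build g c).L (i.1 :: q) = (c i).L q :=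
  dif_pos i.2

theorem build_injective (g : σ.Gen) : Function.Injective (σ.build g) := by
  intro c c' h
  funext i
  apply Tree.ext
  funext q
  simpa only [build_L_cons] using congrFun (congrArg Tree.L h) (i.1 :: q)

theorem updV_self (ρ : σ.Val) (s : σ.Srt) (n : ℕ) (t : σ.Tree s) : updV ρ s n t s n = t := by
  simp [updV]

theorem updV_of_ne (ρ : σ.Val) (s : σ.Srt) (n : ℕ) (t : σ.Tree s) {x : (s : σ.Srt) × ℕ}
    (hx : x ≠ ⟨s, n⟩) : updV ρ s n t x.1 x.2 = ρ x.1 x.2 := by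
  obtain ⟨s', m⟩ := x
  unfold updV
  split_ifs with hs hm
  · subst hs hm; exact absurd rfl hx
  all_goals rfl

theorem Tm.eval_congr {ρ₁ ρ₂ : σ.Val} :
    ∀ {s : σ.Srt} (a : σ.Tm s), (∀ x ∈ a.fv, ρ₁ x.1 x.2 = ρ₂ x.1 x.2) →
      a.eval ρ₁ = a.eval ρ₂
  | _, .var s n, h => h ⟨s, n⟩ rfl
  | _, .app g args, h => congrArg (σ.build g) <| funext fun i =>
      (args i).eval_congr fun x hx => h x (Set.mem_iUnion.mpr ⟨i, hx⟩)

theorem updV_congr {ρ₁ ρ₂ : σ.Val} {S : Set ((s : σ.Srt) × ℕ)} (s : σ.Srt) (n : ℕ)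
    (t : σ.Tree s) (h : ∀ x ∈ S \ {⟨s, n⟩}, ρ₁ x.1 x.2 = ρ₂ x.1 x.2) :
    ∀ x ∈ S, updV ρ₁ s n t x.1 x.2 = updV ρ₂ s n t x.1 x.2 := by
  intro x hx
  by_cases hxn : x = ⟨s, n⟩
  · subst hxn; rw [updV_self, updV_self]
  · rw [updV_of_ne _ _ _ _ hxn, updV_of_ne _ _ _ _ hxn]
    exact h x ⟨hx, hxn⟩

theorem Fml.sat_congr (φ : σ.Fml) {ρ₁ ρ₂ : σ.Val}
    (h : ∀ x ∈ φ.fv, ρ₁ x.1 x.2 = ρ₂ x.1 x.2) :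
    φ.Sat ρ₁ ↔ φ.Sat ρ₂ := by
  induction φ generalizing ρ₁ ρ₂ with
  | tru | fls => rfl
  | eq a b =>
    exact Eq.congr (a.eval_congr fun x hx => h x (.inl hx)) (b.eval_congr fun x hx => h x (.inr hx))
  | fin a => exact iff_of_eq (congrArg Tree.IsFinite (a.eval_congr h))
  | not φ ih => exact not_congr (ih h)
  | and φ ψ ihφ ihψ =>
    exact and_congr (ihφ fun x hx => h x (.inl hx)) (ihψ fun x hx => h x (.inr hx))
  | or φ ψ ihφ ihψ =>
    exact or_congr (ihφ fun x hx => h x (.inl hx)) (ihψ fun x hx => h x (.inr hx))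
  | imp φ ψ ihφ ihψ =>
    exact imp_congr (ihφ fun x hx => h x (.inl hx)) (ihψ fun x hx => h x (.inr hx))
  | ex s n φ ih => exact exists_congr fun t => ih (updV_congr s n t h)
  | all s n φ ih => exact forall_congr' fun t => ih (updV_congr s n t h)

end Sig

namespace DSig

variable {σ : DSig}

theorem buildD_injective (g : σ.Gen) : Function.Injective (σ.buildD g) := by
  intro c c' h
  have hval : σ.toSig.build g (fun i => (c i).1) = σ.toSig.build g (fun i => (c' i).1) :=
    congrArg Subtype.val h
  exact funext fun i => Subtype.ext (congrFun (σ.toSig.build_injective g hval) i)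

theorem nonempty_dom_of_tree {s : σ.Srt} (t : σ.toSig.Tree s) : Nonempty (σ.Dom s) := by
  by_cases hs : σ.isData s
  · obtain ⟨t', ht'⟩ := σ.wfData s hs
    exact ⟨⟨t', fun _ => ht'⟩⟩
  · exact ⟨⟨t, fun hs' => absurd hs' hs⟩⟩

open Classical in
theorem nonempty_dStruct (h : ∀ s, Nonempty (σ.Dom s)) : Nonempty σ.DStruct :=
  ⟨{ sel := fun g i t =>
       if ht : ∃ c, σ.buildD g c = t then ht.choose i else Classical.choice (h _)
     sel_spec := fun g i c => by
       have hc : ∃ c', σ.buildD g c' = σ.buildD g c := ⟨c, rfl⟩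
       rw [dif_pos hc]
       exact congrFun (buildD_injective g hc.choose_spec) i }⟩

def DVal.toVal (ρ : σ.DVal) : σ.toSig.Val := fun s n => (ρ s n).1

open Classical in
noncomputable def toDVal (ρ : σ.toSig.Val) : σ.DVal := fun s n =>
  if h : σ.isData s → (ρ s n).IsFinite then ⟨ρ s n, h⟩
  else Classical.choice (nonempty_dom_of_tree (ρ s n))

theorem toDVal_val {ρ : σ.toSig.Val} {s : σ.Srt} {n : ℕ}
    (h : σ.isData s → (ρ s n).IsFinite) :
    (toDVal ρ s n).1 = ρ s n :=
  congrArg Subtype.val (dif_pos h)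

theorem DVal.toVal_updD (ρ : σ.DVal) (s : σ.Srt) (n : ℕ) (t : σ.Dom s) :
    (updD ρ s n t).toVal = Sig.updV ρ.toVal s n t.1 := by
  funext s' m
  unfold toVal updD Sig.updV
  split_ifs with hs hm
  · subst hs hm; rfl
  all_goals rfl

theorem DTm.eval_val (M : σ.DStruct) (ρ : σ.DVal) :
    ∀ {s : σ.Srt} (a : σ.DTm s), a.SelFree → (a.eval M ρ).1 = (toTm σ a).eval ρ.toVal
  | _, .var _ _, _ => rfl
  | _, .ctor g args, hsf =>
    congrArg (σ.toSig.build g) (funext fun i => (args i).eval_val M ρ (hsf i))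

theorem DTm.fv_toTm : ∀ {s : σ.Srt} (a : σ.DTm s), a.SelFree → (toTm σ a).fv ⊆ a.fv
  | _, .var _ _, _ => subset_rfl
  | _, .ctor _ args, hsf => Set.iUnion_mono fun i => (args i).fv_toTm (hsf i)

theorem DFml.fv_relFin {φ : σ.DFml} (hsf : φ.SelFree) : (relFin σ φ).fv ⊆ φ.fv := by
  induction φ with
  | eq a b => exact Set.union_subset_union (a.fv_toTm hsf.1) (b.fv_toTm hsf.2)
  | not φ ih => exact ih hsf
  | and φ ψ ihφ ihψ | or φ ψ ihφ ihψ | imp φ ψ ihφ ihψ =>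
    exact Set.union_subset_union (ihφ hsf.1) (ihψ hsf.2)
  | ex s n φ ih | all s n φ ih =>
    rw [relFin]
    split_ifs
    · simpa only [Sig.Fml.fv, Sig.Tm.fv, fv, Set.union_sdiff_distrib, Set.sdiff_self,
        Set.empty_union] using Set.sdiff_subset_sdiff_left (ih hsf)
    · exact Set.sdiff_subset_sdiff_left (ih hsf)

theorem sat_relFin_ex (ρ : σ.toSig.Val) (s : σ.Srt) (n : ℕ) (φ : σ.DFml) :
    (relFin σ (.ex s n φ)).Sat ρ ↔
      ∃ t : σ.toSig.Tree s, (σ.isData s → t.IsFinite) ∧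
        (relFin σ φ).Sat (Sig.updV ρ s n t) := by
  rw [relFin]
  split_ifs with hs
  · simp [Sig.Fml.Sat, Sig.Tm.eval, Sig.updV_self, hs]
  · simp [Sig.Fml.Sat, hs]

theorem sat_relFin_all (ρ : σ.toSig.Val) (s : σ.Srt) (n : ℕ) (φ : σ.DFml) :
    (relFin σ (.all s n φ)).Sat ρ ↔
      ∀ t : σ.toSig.Tree s, (σ.isData s → t.IsFinite) →
        (relFin σ φ).Sat (Sig.updV ρ s n t) := by
  rw [relFin]
  split_ifs with hs
  · simp [Sig.Fml.Sat, Sig.Tm.eval, Sig.updV_self, hs]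
  · simp [Sig.Fml.Sat, hs]

theorem DFml.sat_iff_sat_relFin (M : σ.DStruct) {φ : σ.DFml} (hsf : φ.SelFree) (ρ : σ.DVal) :
    φ.Sat M ρ ↔ (relFin σ φ).Sat ρ.toVal := by
  induction φ generalizing ρ with
  | eq a b =>
    simp only [Sat, relFin, Sig.Fml.Sat]
    rw [← a.eval_val M ρ hsf.1, ← b.eval_val M ρ hsf.2]
    exact Subtype.ext_iff
  | not φ ih => exact not_congr (ih hsf ρ)
  | and φ ψ ihφ ihψ => exact and_congr (ihφ hsf.1 ρ) (ihψ hsf.2 ρ)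
  | or φ ψ ihφ ihψ => exact or_congr (ihφ hsf.1 ρ) (ihψ hsf.2 ρ)
  | imp φ ψ ihφ ihψ => exact imp_congr (ihφ hsf.1 ρ) (ihψ hsf.2 ρ)
  | ex s n φ ih =>
    simp only [sat_relFin_ex, Sat, ih hsf, DVal.toVal_updD]
    exact ⟨fun ⟨t, h⟩ => ⟨t.1, t.2, h⟩, fun ⟨t, ht, h⟩ => ⟨⟨t, ht⟩, h⟩⟩
  | all s n φ ih =>
    simp only [sat_relFin_all, Sat, ih hsf, DVal.toVal_updD]
    exact ⟨fun h t ht => h ⟨t, ht⟩, fun h t => h t.1 t.2⟩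

end DSig

/-- Every selector-free formula `φ` of the theory of
(co)datatypes is equisatisfiable with the formula `φ''` of the extended language
of trees obtained by relativizing every quantifier over a datatype to `fin` and
conjoining `fin(u)` for every free variable `u` of datatype sort (the conjoined
constraints are expressed semantically: the satisfying valuation must assign
finite trees to the free variables of datatype sorts): `φ` is satisfiable in some
structure of (co)datatypes iff `φ''` is satisfiable in the structure `𝒯` of
trees. -/
theorem codatatypes_to_trees (σ : DSig) (φ : σ.DFml) (hsf : φ.SelFree) :
    (∃ (M : σ.DStruct) (ρ : σ.DVal), DSig.DFml.Sat M ρ φ) ↔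
    (∃ ρ : σ.toSig.Val,
      (∀ x ∈ φ.fv, σ.isData x.1 → Sig.Tree.IsFinite (ρ x.1 x.2)) ∧
      Sig.Fml.Sat ρ (relFin σ φ)) := by
  constructor
  · rintro ⟨M, ρ, hφ⟩
    exact ⟨ρ.toVal, fun x _ hx => (ρ x.1 x.2).2 hx,
      (DSig.DFml.sat_iff_sat_relFin M hsf ρ).mp hφ⟩
  · rintro ⟨ρ, hfin, hφ⟩
    obtain ⟨M⟩ := DSig.nonempty_dStruct fun s => DSig.nonempty_dom_of_tree (ρ s 0)
    refine ⟨M, DSig.toDVal ρ, (DSig.DFml.sat_iff_sat_relFin M hsf _).mpr ?_⟩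
    refine ((relFin σ φ).sat_congr fun x hx => ?_).mpr hφ
    exact DSig.toDVal_val (hfin x (DSig.DFml.fv_relFin hsf hx))
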